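/- Subsolution computation of Remark 3.4 (Euclidean-ambient case, used for the uniform lower bound on the boundary gradient): let U ⊆ ℝⁿ be open and let u₀ be a C² function on U satisfying, for some constant C₀ ≥ 1: 1/C₀ ≤ |Du₀| ≤ C₀, |D²u₀| ≤ C₀, and div(Du₀/|Du₀|) + 1/|Du₀| = 0 on U. Then for every T ∈ (0,1] there exists c₁ > 0 depending only on C₀ such that for every ε ∈ (0,1] and σ ∈ (0,1], the function v = c₁ u₀ (T − u₀) satisfies the subsolution inequality div(Dv/√(ε² + |Dv|²)) + 1/√(ε² + |Dv|²) ≥ σv on U ∩ {0 ≤ u₀ < T}. -/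

import Mathlib

open scoped BigOperators RealInnerProductSpace

/-- Divergence of a vector field on Euclidean space. -/
noncomputable def vdiv {n : ℕ} (F : EuclideanSpace ℝ (Fin n) → EuclideanSpace ℝ (Fin n))
    (x : EuclideanSpace ℝ (Fin n)) : ℝ :=
  ∑ i, fderiv ℝ F x (EuclideanSpace.single i 1) i

/-- The regularized level set operator
`Q_{ε,σ,κ}[w] = div(Dw/√(ε²+|Dw|²)) + κ/√(ε²+|Dw|²) − σw`. -/
noncomputable def Qop {n : ℕ} (ε σ κ : ℝ) (w : EuclideanSpace ℝ (Fin n) → ℝ)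
    (x : EuclideanSpace ℝ (Fin n)) : ℝ :=
  vdiv (fun y => (Real.sqrt (ε ^ 2 + ‖gradient w y‖ ^ 2))⁻¹ • gradient w y) x
    + κ / Real.sqrt (ε ^ 2 + ‖gradient w x‖ ^ 2) - σ * w x

/-- `u` solves the (ε,σ,κ)-Dirichlet problem on `K`:
`Q_{ε,σ,κ}[u] = 0` in `K` and `u = 0` on `∂K`. -/
def SolvesDirichlet {n : ℕ} (ε σ κ : ℝ) (K : Set (EuclideanSpace ℝ (Fin n)))
    (u : EuclideanSpace ℝ (Fin n) → ℝ) : Prop :=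
  (∀ x ∈ K, Qop ε σ κ u x = 0) ∧ ∀ x ∈ frontier K, u x = 0

/-! Write `v = φ ∘ u₀` with `φ t = c₁ t (T - t)`. Since `Dv = φ'(u₀) Du₀` is parallel to `Du₀`,
the regularized curvature of `v` is expressed through `φ'(u₀)`, `φ''`, `Δu₀`, `|Du₀|` and
`B = ⟨Du₀, D²u₀ Du₀⟩`, and the level-set equation of `u₀` gives `Δu₀ = B / |Du₀|² - 1`.
With `W = √(ε² + |Dv|²)` the operator then equals
`(1 - φ') / W + ε² (φ' B + φ'' |Du₀|⁴) / (|Du₀|² W³) - σ v`.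
For `c₁ = 1 / (8 C₀²)` one has `|φ'| ≤ 1/8`, the `ε²`-term is at least `-(3/8) / W`,
`W ≤ 2` and `σ v ≤ 1/32`, so the sum is nonnegative. -/

open InnerProductSpace Filter Topology

theorem hasFDerivAt_inv_sqrt_add_norm_sq {E : Type*} [NormedAddCommGroup E] [NormedSpace ℝ E]
    {F : Type*} [NormedAddCommGroup F] [InnerProductSpace ℝ F]
    {H : E → F} {h : E →L[ℝ] F} {x : E} {a : ℝ}
    (hH : HasFDerivAt H h x) (ha : 0 < a + ‖H x‖ ^ 2) :
    HasFDerivAt (fun y => (√(a + ‖H y‖ ^ 2))⁻¹)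
      (-(√(a + ‖H x‖ ^ 2) ^ 3)⁻¹ • (innerSL ℝ (H x)).comp h) x := by
  have hW : 0 < √(a + ‖H x‖ ^ 2) := Real.sqrt_pos.mpr ha
  refine ((hasDerivAt_inv hW.ne').comp_hasFDerivAt x
    ((hH.norm_sq.const_add a).sqrt ha.ne')).congr_fderiv ?_
  ext v
  simp [Real.sq_sqrt ha.le]
  field_simp
  rw [Real.sq_sqrt ha.le]

theorem HasDerivAt.comp_hasGradientAt {F : Type*} [NormedAddCommGroup F] [InnerProductSpace ℝ F]
    [CompleteSpace F] {φ : ℝ → ℝ} {φ' : ℝ} {u : F → ℝ} {g x : F}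
    (hφ : HasDerivAt φ φ' (u x)) (hu : HasGradientAt u g x) :
    HasGradientAt (fun y => φ (u y)) (φ' • g) x := by
  rw [hasGradientAt_iff_hasFDerivAt] at hu ⊢
  refine (hφ.comp_hasFDerivAt x hu).congr_fderiv ?_
  ext v
  simp

theorem ContDiffAt.differentiableAt_gradient {F : Type*} [NormedAddCommGroup F]
    [InnerProductSpace ℝ F] [CompleteSpace F] {u : F → ℝ} {x : F} {k : WithTop ℕ∞}
    (hu : ContDiffAt ℝ k u x) (hk : 2 ≤ k) : DifferentiableAt ℝ (gradient u) x :=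
  (toDual ℝ F).symm.toContinuousLinearEquiv.differentiableAt.comp x
    ((hu.fderiv_right hk).differentiableAt one_ne_zero)

theorem abs_real_inner_apply_le {F : Type*} [NormedAddCommGroup F] [InnerProductSpace ℝ F]
    (A : F →L[ℝ] F) (v : F) : |⟪v, A v⟫| ≤ ‖A‖ * ‖v‖ ^ 2 :=
  calc |⟪v, A v⟫| ≤ ‖v‖ * ‖A v‖ := abs_real_inner_le_norm _ _
    _ ≤ ‖v‖ * (‖A‖ * ‖v‖) := by gcongr; exact A.le_opNorm v
    _ = ‖A‖ * ‖v‖ ^ 2 := by ring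

section Divergence

variable {n : ℕ}

theorem EuclideanSpace.sum_apply_single_mul (ℓ : EuclideanSpace ℝ (Fin n) →L[ℝ] ℝ)
    (w : EuclideanSpace ℝ (Fin n)) :
    ∑ i, ℓ (EuclideanSpace.single i 1) * w i = ℓ w := by
  conv_rhs => rw [← (EuclideanSpace.basisFun (Fin n) ℝ).sum_repr w]
  simp [map_sum, mul_comm]

theorem vdiv_congr {F F' : EuclideanSpace ℝ (Fin n) → EuclideanSpace ℝ (Fin n)}
    {x : EuclideanSpace ℝ (Fin n)} (h : F =ᶠ[𝓝 x] F') : vdiv F x = vdiv F' x := by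
  simp only [vdiv, h.fderiv_eq]

theorem vdiv_smul {G : EuclideanSpace ℝ (Fin n) → EuclideanSpace ℝ (Fin n)}
    {s : EuclideanSpace ℝ (Fin n) → ℝ} {ds : EuclideanSpace ℝ (Fin n) →L[ℝ] ℝ}
    {x : EuclideanSpace ℝ (Fin n)} (hG : DifferentiableAt ℝ G x) (hs : HasFDerivAt s ds x) :
    vdiv (fun y => s y • G y) x = s x * vdiv G x + ds (G x) := by
  rw [vdiv, (hs.fun_smul hG.hasFDerivAt).fderiv, vdiv, Finset.mul_sum,
    ← EuclideanSpace.sum_apply_single_mul ds (G x), ← Finset.sum_add_distrib]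
  simp

theorem vdiv_inv_sqrt_add_norm_sq_smul {H : EuclideanSpace ℝ (Fin n) → EuclideanSpace ℝ (Fin n)}
    {x : EuclideanSpace ℝ (Fin n)} {a : ℝ} (hH : DifferentiableAt ℝ H x)
    (ha : 0 < a + ‖H x‖ ^ 2) :
    vdiv (fun y => (√(a + ‖H y‖ ^ 2))⁻¹ • H y) x =
      vdiv H x / √(a + ‖H x‖ ^ 2) - ⟪H x, fderiv ℝ H x (H x)⟫ / √(a + ‖H x‖ ^ 2) ^ 3 := by
  rw [vdiv_smul hH (hasFDerivAt_inv_sqrt_add_norm_sq hH.hasFDerivAt ha)]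
  simp
  ring

theorem vdiv_eq_of_vdiv_normalize_add_inv_norm_eq_zero
    {G : EuclideanSpace ℝ (Fin n) → EuclideanSpace ℝ (Fin n)}
    {x : EuclideanSpace ℝ (Fin n)} (hG : DifferentiableAt ℝ G x) (hGx : G x ≠ 0)
    (h : vdiv (fun y => ‖G y‖⁻¹ • G y) x + ‖G x‖⁻¹ = 0) :
    vdiv G x = ⟪G x, fderiv ℝ G x (G x)⟫ / ‖G x‖ ^ 2 - 1 := by
  have hfield : (fun y => ‖G y‖⁻¹ • G y) = fun y => (√(0 + ‖G y‖ ^ 2))⁻¹ • G y := by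
    simp [Real.sqrt_sq (norm_nonneg _)]
  rw [hfield, vdiv_inv_sqrt_add_norm_sq_smul hG (by positivity)] at h
  simp only [zero_add, Real.sqrt_sq (norm_nonneg _)] at h
  have hr : ‖G x‖ ≠ 0 := norm_ne_zero_iff.mpr hGx
  field_simp at h ⊢
  linear_combination h

theorem Qop_comp {u : EuclideanSpace ℝ (Fin n) → ℝ} {φ φ' : ℝ → ℝ} {φ'' ε σ κ : ℝ}
    {x : EuclideanSpace ℝ (Fin n)} (hφ : ∀ t, HasDerivAt φ (φ' t) t)
    (hφ' : HasDerivAt φ' φ'' (u x)) (hu : ∀ᶠ y in 𝓝 x, DifferentiableAt ℝ u y)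
    (hG : DifferentiableAt ℝ (gradient u) x) (hε : ε ≠ 0) :
    Qop ε σ κ (fun y => φ (u y)) x =
      (φ' (u x) * vdiv (gradient u) x + φ'' * ‖gradient u x‖ ^ 2)
          / √(ε ^ 2 + φ' (u x) ^ 2 * ‖gradient u x‖ ^ 2)
        - (φ' (u x) ^ 3 * ⟪gradient u x, fderiv ℝ (gradient u) x (gradient u x)⟫
            + φ' (u x) ^ 2 * φ'' * ‖gradient u x‖ ^ 4)
          / √(ε ^ 2 + φ' (u x) ^ 2 * ‖gradient u x‖ ^ 2) ^ 3
        + κ / √(ε ^ 2 + φ' (u x) ^ 2 * ‖gradient u x‖ ^ 2) - σ * φ (u x) := by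
  have hp : HasFDerivAt (fun y => φ' (u y)) (φ'' • toDual ℝ _ (gradient u x)) x :=
    hφ'.comp_hasFDerivAt x hu.self_of_nhds.hasGradientAt.hasFDerivAt
  have hgrad : gradient (fun y => φ (u y)) =ᶠ[𝓝 x] fun y => φ' (u y) • gradient u y :=
    hu.mono fun y hy => ((hφ _).comp_hasGradientAt hy.hasGradientAt).gradient
  have hfield : (fun y => (√(ε ^ 2 + ‖gradient (fun y => φ (u y)) y‖ ^ 2))⁻¹
      • gradient (fun y => φ (u y)) y) =ᶠ[𝓝 x]
      fun y => (√(ε ^ 2 + ‖φ' (u y) • gradient u y‖ ^ 2))⁻¹ • (φ' (u y) • gradient u y) :=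
    hgrad.fun_comp fun H => (√(ε ^ 2 + ‖H‖ ^ 2))⁻¹ • H
  have hH := hp.fun_smul hG.hasFDerivAt
  rw [Qop, vdiv_congr hfield,
    vdiv_inv_sqrt_add_norm_sq_smul hH.differentiableAt (by positivity), hH.fderiv,
    vdiv_smul hG hp, hgrad.self_of_nhds]
  simp only [add_apply, FunLike.coe_smul, Pi.smul_apply, map_smul,
    ContinuousLinearMap.smulRight_apply, toDual_apply_apply, smul_eq_mul, norm_smul,
    Real.norm_eq_abs, mul_pow, sq_abs, inner_add_right, real_inner_smul_left,
    real_inner_smul_right, real_inner_self_eq_norm_sq]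
  ring

end Divergence

theorem bending_estimate {C₀ c P r B ε σ v : ℝ} (hC₀ : 1 ≤ C₀) (hc : c = (8 * C₀ ^ 2)⁻¹)
    (hP : |P| ≤ c) (hr : 0 < r) (hr' : r ≤ C₀) (hB : |B| ≤ C₀ * r ^ 2) (hε : 0 < ε)
    (hε' : ε ≤ 1) (hσ : σ ≤ 1) (hv : 0 ≤ v) (hv' : v ≤ c / 4) :
    0 ≤ (P * (B / r ^ 2 - 1) + -2 * c * r ^ 2) / √(ε ^ 2 + P ^ 2 * r ^ 2)
      - (P ^ 3 * B + P ^ 2 * (-2 * c) * r ^ 4) / √(ε ^ 2 + P ^ 2 * r ^ 2) ^ 3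
      + 1 / √(ε ^ 2 + P ^ 2 * r ^ 2) - σ * v := by
  set W := √(ε ^ 2 + P ^ 2 * r ^ 2)
  have hW : W ^ 2 = ε ^ 2 + P ^ 2 * r ^ 2 := Real.sq_sqrt (by positivity)
  have hW0 : 0 < W := Real.sqrt_pos.mpr (by positivity)
  clear_value W
  have hcC₀ : c * C₀ ^ 2 = 1 / 8 := by rw [hc]; field_simp
  have hc0 : 0 < c := by rw [hc]; positivity
  have hc8 : c ≤ 1 / 8 := hcC₀ ▸ le_mul_of_one_le_right hc0.le (one_le_pow₀ hC₀)
  have hcC₀' : c * C₀ ≤ 1 / 8 := by nlinarith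
  have hPr : P ^ 2 * r ^ 2 ≤ c ^ 2 * C₀ ^ 2 := by
    have hP2 : P ^ 2 ≤ c ^ 2 := sq_le_sq' (neg_le_of_abs_le hP) (le_of_abs_le hP)
    have hr2 : r ^ 2 ≤ C₀ ^ 2 := pow_le_pow_left₀ hr.le hr' 2
    exact mul_le_mul hP2 hr2 (by positivity) (by positivity)
  have hW2 : W ≤ 2 := by nlinarith
  suffices 0 ≤ (1 - P) * r ^ 2 * W ^ 2 + ε ^ 2 * (P * B - 2 * c * r ^ 4) - σ * v * r ^ 2 * W ^ 3 by
    refine (div_nonneg this (by positivity : 0 ≤ r ^ 2 * W ^ 3)).trans_eq ?_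
    field_simp
    linear_combination (2 * c * r ^ 4 - P * B) * hW
  have hPB : |P * B - 2 * c * r ^ 4| ≤ 3 / 8 * r ^ 2 := by
    have hr4 : r ^ 4 ≤ C₀ ^ 2 * r ^ 2 := by
      rw [show r ^ 4 = r ^ 2 * r ^ 2 by ring]
      gcongr
    calc |P * B - 2 * c * r ^ 4| ≤ |P * B| + |2 * c * r ^ 4| := abs_sub _ _
      _ = |P| * |B| + 2 * c * r ^ 4 := by
        rw [abs_mul, abs_of_pos (by positivity : 0 < 2 * c * r ^ 4)]
      _ ≤ c * (C₀ * r ^ 2) + 2 * c * (C₀ ^ 2 * r ^ 2) := by gcongr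
      _ = (c * C₀ + 2 * (c * C₀ ^ 2)) * r ^ 2 := by ring
      _ ≤ 3 / 8 * r ^ 2 := by gcongr; linarith
  have hcurv : -(3 / 8 * r ^ 2 * W ^ 2) ≤ ε ^ 2 * (P * B - 2 * c * r ^ 4) := by
    have hεW : ε ^ 2 ≤ W ^ 2 := by nlinarith
    calc -(3 / 8 * r ^ 2 * W ^ 2) ≤ -(ε ^ 2 * |P * B - 2 * c * r ^ 4|) := by
          rw [neg_le_neg_iff, mul_comm (3 / 8 * r ^ 2)]
          exact mul_le_mul hεW hPB (abs_nonneg _) (by positivity)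
      _ ≤ ε ^ 2 * (P * B - 2 * c * r ^ 4) := by
          have := neg_abs_le (ε ^ 2 * (P * B - 2 * c * r ^ 4))
          rwa [abs_mul, abs_of_nonneg (sq_nonneg ε)] at this
  have hσv : σ * v ≤ 1 / 32 := by
    nlinarith [mul_le_mul_of_nonneg_right hσ hv]
  have hP8 : P ≤ 1 / 8 := (le_abs_self P).trans (hP.trans hc8)
  have hr2W2 : 0 ≤ r ^ 2 * W ^ 2 := by positivity
  nlinarith [mul_le_mul_of_nonneg_right hP8 hr2W2,
    mul_le_mul_of_nonneg_right hσv (by positivity : 0 ≤ r ^ 2 * W ^ 3),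
    mul_le_mul_of_nonneg_left hW2 hr2W2]

/-- subsolution computation of Remark 3.4 (Euclidean-ambient case):
`v = c₁ u₀ (T − u₀)` satisfies `div(Dv/√(ε²+|Dv|²)) + 1/√(ε²+|Dv|²) ≥ σ v`,
written as `Qop ε σ 1 v x ≥ 0`. -/
theorem bending_subsolution (C₀ : ℝ) (hC₀ : 1 ≤ C₀) :
    ∃ c₁ : ℝ, 0 < c₁ ∧
      ∀ (T : ℝ), 0 < T → T ≤ 1 →
      ∀ (n : ℕ) (U : Set (EuclideanSpace ℝ (Fin n))) (u₀ : EuclideanSpace ℝ (Fin n) → ℝ)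
        (ε σ : ℝ), IsOpen U → ContDiffOn ℝ 2 u₀ U →
        (∀ x ∈ U, C₀⁻¹ ≤ ‖gradient u₀ x‖) → (∀ x ∈ U, ‖gradient u₀ x‖ ≤ C₀) →
        (∀ x ∈ U, ‖fderiv ℝ (gradient u₀) x‖ ≤ C₀) →
        (∀ x ∈ U, vdiv (fun y => ‖gradient u₀ y‖⁻¹ • gradient u₀ y) x + ‖gradient u₀ x‖⁻¹ = 0) →
        0 < ε → ε ≤ 1 → 0 < σ → σ ≤ 1 →
        ∀ x ∈ U ∩ {y | 0 ≤ u₀ y ∧ u₀ y < T},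
          0 ≤ Qop ε σ 1 (fun y => c₁ * u₀ y * (T - u₀ y)) x := by
  refine ⟨(8 * C₀ ^ 2)⁻¹, by positivity, ?_⟩
  intro T _ hT n U u₀ ε σ hU hu hGlow hGup hD2 hlevel hε hε1 _ hσ x ⟨hxU, hx0, hxT⟩
  set c := (8 * C₀ ^ 2)⁻¹ with hc
  have hc0 : 0 < c := by positivity
  have hu₀_at : ∀ y ∈ U, ContDiffAt ℝ 2 u₀ y := fun y hy => hu.contDiffAt (hU.mem_nhds hy)
  have hG := (hu₀_at x hxU).differentiableAt_gradient le_rfl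
  have hr : 0 < ‖gradient u₀ x‖ := (inv_pos.mpr (by linarith)).trans_le (hGlow x hxU)
  have hφ (t : ℝ) : HasDerivAt (fun t => c * t * (T - t)) (c * (T - 2 * t)) t := by
    refine (((hasDerivAt_id' t).const_mul c).fun_mul
      ((hasDerivAt_id' t).const_sub T)).congr_deriv ?_
    ring
  have hφ' : HasDerivAt (fun t => c * (T - 2 * t)) (-2 * c) (u₀ x) := by
    refine ((((hasDerivAt_id' (u₀ x)).const_mul 2).const_sub T).const_mul c).congr_deriv ?_
    ring
  have hQ := Qop_comp (σ := σ) (κ := 1) hφ hφ'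
    (eventually_of_mem (hU.mem_nhds hxU) fun y hy => (hu₀_at y hy).differentiableAt two_ne_zero)
    hG hε.ne'
  beta_reduce at hQ
  rw [hQ, vdiv_eq_of_vdiv_normalize_add_inv_norm_eq_zero hG (norm_pos_iff.mp hr) (hlevel x hxU)]
  refine bending_estimate hC₀ hc ?_ hr (hGup x hxU) ?_ hε hε1 hσ (by positivity) ?_
  · rw [abs_mul, abs_of_pos hc0]
    exact mul_le_of_le_one_right hc0.le ((abs_le.mpr ⟨by linarith, by linarith⟩).trans hT)
  · exact (abs_real_inner_apply_le _ _).trans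
      (mul_le_mul_of_nonneg_right (hD2 x hxU) (sq_nonneg _))
  · have hquad : u₀ x * (T - u₀ x) ≤ 1 / 4 := by nlinarith [sq_nonneg (T - 2 * u₀ x)]
    rw [mul_assoc, div_eq_mul_one_div]
    exact mul_le_mul_of_nonneg_left hquad hc0.le
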